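/- Let m, n, r be positive integers, r ≥ 2, r divides m, rn ≤ m, and suppose a finite family E of n-element subsets of an m-element set V satisfies |E| * r^{1-n} * exp(-n(n-1)(r-1)/(2m)) < 1. Then there exists a partition of V into r parts of equal size m/r such that no member of E is contained in a single part. -/

import Mathlib

/-!
Identify `V` with `Fin r × Fin k` (`m = r k`) and colour by the first coordinate; precomposing
with a uniformly random permutation of `V` gives a random equitable colouring. A fixed `n`-set
falls into a given colour class for at most `k^{(n)} (m - n)!` of the `m!` permutations, where
`k^{(n)} = k (k - 1) ⋯ (k - n + 1)`, so the expected number of monochromatic edges is at most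
`|E| r k^{(n)} / m^{(n)}`. Termwise `r (k - i) ≤ e^{-(r - 1) i / m} (m - i)` because
`1 - x ≤ e^{-x}`, and multiplying over `i < n` bounds the expectation by
`|E| r^{1-n} e^{-n(n-1)(r-1)/(2m)} < 1`.
-/

open Finset Nat

section PermCount

variable {β : Type*} [Fintype β] [DecidableEq β]

theorem card_perm_fixing_pointwise (S : Finset β) :
    #{σ : Equiv.Perm β | ∀ x ∈ S, σ x = x} = (Fintype.card β - #S)! := by
  rw [← Fintype.card_subtype,
    Fintype.card_congr ((Equiv.subtypeEquivRight fun σ => ?_).trans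
      (Equiv.Perm.subtypeEquivSubtypePerm (· ∉ S)).symm),
    Fintype.card_perm, Fintype.card_subtype_compl, Fintype.card_coe]
  simp only [not_not]

theorem card_perm_eqOn (S : Finset β) (σ₀ : Equiv.Perm β) :
    #{σ : Equiv.Perm β | ∀ x ∈ S, σ x = σ₀ x} = (Fintype.card β - #S)! := by
  rw [← card_perm_fixing_pointwise S]
  refine card_nbij' (σ₀⁻¹ * ·) (σ₀ * ·) ?_ ?_ ?_ ?_ <;> intro σ hσ <;> simp_all

theorem card_perm_mapsTo_le (S B : Finset β) :
    #{σ : Equiv.Perm β | ∀ x ∈ S, σ x ∈ B} ≤ (#B).descFactorial #S * (Fintype.card β - #S)! := by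
  set bad : Finset (Equiv.Perm β) := {σ | ∀ x ∈ S, σ x ∈ B}
  let restrict (σ : Equiv.Perm β) (x : S) : β := σ x
  let coeEmb : (S ↪ B) ↪ (S → β) := ⟨fun e x => e x, fun e e' h => by ext x; exact congrFun h x⟩
  have hmaps : ∀ σ ∈ bad, restrict σ ∈ univ.map coeEmb := by
    intro σ hσ
    simp only [bad, mem_filter, mem_univ, true_and] at hσ
    exact mem_map.mpr ⟨⟨fun x => ⟨σ x, hσ x x.2⟩, fun x y h => Subtype.ext (σ.injective
      (congrArg Subtype.val h))⟩, mem_univ _, rfl⟩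
  have hfiber : ∀ g ∈ univ.map coeEmb, #{σ ∈ bad | restrict σ = g} ≤ (Fintype.card β - #S)! := by
    intro g _
    rcases eq_empty_or_nonempty {σ ∈ bad | restrict σ = g} with hempty | ⟨σ₀, hσ₀⟩
    · simp [hempty]
    · rw [← card_perm_eqOn S σ₀]
      refine card_le_card fun σ hσ => ?_
      simp only [mem_filter, mem_univ, true_and] at hσ hσ₀ ⊢
      exact fun x hx => congrFun (hσ.2.trans hσ₀.2.symm) ⟨x, hx⟩
  calc #bad ≤ (Fintype.card β - #S)! * #(univ.map coeEmb) :=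
        card_le_mul_card_image_of_maps_to hmaps _ hfiber
    _ = (#B).descFactorial #S * (Fintype.card β - #S)! := by
      rw [card_map, Finset.card_univ, Fintype.card_embedding_eq, Fintype.card_coe,
        Fintype.card_coe, mul_comm]

end PermCount

theorem sum_range_cast_id (n : ℕ) : ∑ i ∈ range n, (i : ℝ) = n * (n - 1) / 2 := by
  induction n with
  | zero => simp
  | succ n ih => rw [sum_range_succ, ih]; push_cast; ring

theorem cast_descFactorial_eq_prod (a n : ℕ) :
    (a.descFactorial n : ℝ) = ∏ i ∈ range n, ((a : ℝ) - i) := by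
  rw [← descPochhammer_eval_eq_descFactorial, descPochhammer_eval_eq_prod_range]

theorem mul_sub_le_exp_mul_sub {r k i : ℝ} (hr : 1 ≤ r) (hi : 0 ≤ i) (hik : i < k) :
    r * (k - i) ≤ Real.exp (-((r - 1) * i) / (r * k)) * (r * k - i) := by
  have hk : 0 < k := hi.trans_lt hik
  calc r * (k - i) ≤ (1 - (r - 1) * i / (r * k)) * (r * k - i) := by
        have hexpand : (1 - (r - 1) * i / (r * k)) * (r * k - i)
            = r * (k - i) + (r - 1) * i ^ 2 / (r * k) := by
          field_simp
          ring
        have : 0 ≤ r - 1 := by linarith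
        have : 0 ≤ (r - 1) * i ^ 2 / (r * k) := by positivity
        linarith
    _ ≤ Real.exp (-((r - 1) * i) / (r * k)) * (r * k - i) := by
        rw [neg_div]
        gcongr
        · nlinarith
        · exact Real.one_sub_le_exp_neg _

theorem pow_mul_descFactorial_le {r k n : ℕ} (hr : 1 ≤ r) (hnk : n ≤ k) :
    (r : ℝ) ^ n * k.descFactorial n ≤
      Real.exp (-(n * (n - 1) * (r - 1)) / (2 * (r * k))) * (r * k).descFactorial n := by
  have hsum : ∑ i ∈ range n, (-((r - 1) * i) / (r * k) : ℝ) =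
      -(n * (n - 1) * (r - 1)) / (2 * (r * k)) := by
    rw [← sum_div, sum_neg_distrib, ← mul_sum, sum_range_cast_id]
    ring
  have hpow : (r : ℝ) ^ n = ∏ _i ∈ range n, (r : ℝ) := by simp
  rw [cast_descFactorial_eq_prod, cast_descFactorial_eq_prod, ← hsum, Real.exp_sum, hpow,
    ← prod_mul_distrib, ← prod_mul_distrib]
  have hr' : (1 : ℝ) ≤ r := by exact_mod_cast hr
  refine prod_le_prod (fun i hi => ?_) (fun i hi => ?_)
  all_goals have hik : (i : ℝ) < k := by exact_mod_cast (mem_range.mp hi).trans_le hnk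
  · exact mul_nonneg (by linarith) (by linarith)
  · push_cast
    exact mul_sub_le_exp_mul_sub hr' i.cast_nonneg hik

theorem mul_descFactorial_mul_factorial_lt_of_exp_bound {N r k n : ℕ} (hr : 1 ≤ r) (hnk : n ≤ k)
    (hbound : (N : ℝ) * (r : ℝ) ^ (1 - (n : ℤ)) *
        Real.exp (-((n : ℝ) * ((n : ℝ) - 1) * ((r : ℝ) - 1)) / (2 * ((r * k : ℕ) : ℝ))) < 1) :
    N * (r * (k.descFactorial n * (r * k - n)!)) < (r * k)! := by
  set m := r * k
  set X := -((n : ℝ) * ((n : ℝ) - 1) * ((r : ℝ) - 1)) / (2 * (m : ℝ))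
  have hnm : n ≤ m := hnk.trans (Nat.le_mul_of_pos_left k hr)
  have hr0 : (0 : ℝ) < r := by exact_mod_cast hr
  have hratio :
      (r : ℝ) * k.descFactorial n ≤ r ^ (1 - (n : ℤ)) * Real.exp X * m.descFactorial n := by
    have hpow : (r : ℝ) ^ (1 - (n : ℤ)) * r ^ n = r := by
      rw [← zpow_natCast, ← zpow_add₀ hr0.ne', sub_add_cancel, zpow_one]
    have := pow_mul_descFactorial_le hr hnk
    push_cast [X, m] at this ⊢
    calc (r : ℝ) * k.descFactorial n = r ^ (1 - (n : ℤ)) * (r ^ n * k.descFactorial n) := by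
          rw [← mul_assoc, hpow]
      _ ≤ _ := by rw [mul_assoc]; gcongr
  have hreal : (N : ℝ) * r * k.descFactorial n < m.descFactorial n := by
    have hpos : (0 : ℝ) < m.descFactorial n := by exact_mod_cast descFactorial_pos.mpr hnm
    calc (N : ℝ) * r * k.descFactorial n
        ≤ N * (r ^ (1 - (n : ℤ)) * Real.exp X * m.descFactorial n) := by
          rw [mul_assoc]; gcongr
      _ = (N * r ^ (1 - (n : ℤ)) * Real.exp X) * m.descFactorial n := by ring
      _ < m.descFactorial n := mul_lt_of_lt_one_left hpos hbound
  have hnat : N * r * k.descFactorial n < m.descFactorial n := by exact_mod_cast hreal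
  calc N * (r * (k.descFactorial n * (m - n)!)) = N * r * k.descFactorial n * (m - n)! := by ring
    _ < m.descFactorial n * (m - n)! := Nat.mul_lt_mul_of_pos_right hnat (factorial_pos _)
    _ = m ! := by rw [mul_comm, factorial_mul_descFactorial hnm]

theorem card_filter_fst_equiv_eq {β : Type*} [Fintype β] {r k : ℕ} (e : β ≃ Fin r × Fin k)
    (c : Fin r) : #{x | (e x).1 = c} = k := by
  classical
  calc #{x | (e x).1 = c} = #(({c} : Finset (Fin r)) ×ˢ (univ : Finset (Fin k))) :=
        card_equiv e fun x => by simp [Prod.ext_iff, eq_comm]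
    _ = k := by simp

theorem exists_equiv_forall_not_monochromatic {β : Type*} [Fintype β] [DecidableEq β]
    {r k n : ℕ} (hβ : Fintype.card β = r * k) (E : Finset (Finset β)) (hE : ∀ A ∈ E, #A = n)
    (hcount : #E * (r * (k.descFactorial n * (r * k - n)!)) < (r * k)!) :
    ∃ e : β ≃ Fin r × Fin k, ∀ A ∈ E, ∀ c, ¬ ∀ x ∈ A, (e x).1 = c := by
  obtain ⟨e₀⟩ : Nonempty (β ≃ Fin r × Fin k) := ⟨Fintype.equivOfCardEq (by simp [hβ])⟩
  let B (c : Fin r) : Finset β := {x | (e₀ x).1 = c}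
  by_contra! hbad
  have hcover : (univ : Finset (Equiv.Perm β)) ⊆
      E.biUnion fun A => univ.biUnion fun c => {σ | ∀ x ∈ A, σ x ∈ B c} := by
    intro σ _
    obtain ⟨A, hA, c, hc⟩ := hbad (σ.trans e₀)
    simp only [mem_biUnion, mem_univ, mem_filter, true_and]
    exact ⟨A, hA, c, fun x hx => by simpa [B] using hc x hx⟩
  refine hcount.not_ge ?_
  calc (r * k)! = #(univ : Finset (Equiv.Perm β)) := by
        rw [Finset.card_univ, Fintype.card_perm, hβ]
    _ ≤ ∑ A ∈ E, ∑ c : Fin r, #{σ : Equiv.Perm β | ∀ x ∈ A, σ x ∈ B c} :=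
        (card_le_card hcover).trans (card_biUnion_le.trans (sum_le_sum fun _ _ => card_biUnion_le))
    _ ≤ ∑ A ∈ E, ∑ c : Fin r, k.descFactorial n * (r * k - n)! := by
        gcongr with A hA c
        have := card_perm_mapsTo_le A (B c)
        rwa [hE A hA, card_filter_fst_equiv_eq, hβ] at this
    _ = #E * (r * (k.descFactorial n * (r * k - n)!)) := by simp

theorem first_moment_equitable_general (α : Type) (V : Finset α) (E : Finset (Finset α))
    (m n r : ℕ) (hVm : V.card = m) (hr : 2 ≤ r)
    (hdvd : r ∣ m) (hrn : r * n ≤ m)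
    (hE : ∀ A ∈ E, A ⊆ V ∧ A.card = n)
    (hbound : (E.card : ℝ) * (r : ℝ) ^ (1 - (n : ℤ)) *
        Real.exp (-((n : ℝ) * ((n : ℝ) - 1) * ((r : ℝ) - 1)) / (2 * m)) < 1) :
    ∃ f : α → Fin r,
      (∀ c : Fin r, (V.filter (fun v => f v = c)).card = m / r) ∧
      (∀ A ∈ E, ¬ ∃ c : Fin r, ∀ v ∈ A, f v = c) := by
  classical
  obtain ⟨k, rfl⟩ := hdvd
  have hnk : n ≤ k := Nat.le_of_mul_le_mul_left hrn (by omega : 0 < r)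
  have hcount := mul_descFactorial_mul_factorial_lt_of_exp_bound (by omega : 1 ≤ r) hnk hbound
  have hE' : ∀ A ∈ E.image (Finset.subtype (· ∈ V)), #A = n := by
    simp only [mem_image, forall_exists_index, and_imp]
    rintro _ A hA rfl
    rw [card_subtype, filter_true_of_mem (hE A hA).1, (hE A hA).2]
  obtain ⟨e, he⟩ := exists_equiv_forall_not_monochromatic (β := V) (by simp [hVm]) _ hE'
    ((Nat.mul_le_mul_right _ card_image_le).trans_lt hcount)
  let f (v : α) : Fin r := if h : v ∈ V then (e ⟨v, h⟩).1 else ⟨0, by omega⟩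
  refine ⟨f, fun c => ?_, fun A hA ⟨c, hc⟩ => he _ (mem_image_of_mem _ hA) c fun x hx => ?_⟩
  · rw [Nat.mul_div_cancel_left k (by omega), ← card_filter_fst_equiv_eq e c,
      ← card_map (Function.Embedding.subtype _)]
    congr 1
    ext v
    by_cases hv : v ∈ V <;> simp [f, hv]
  · simpa [f, x.2] using hc x.1 (mem_subtype.mp hx)

theorem first_moment_equitable (α : Type) (V : Finset α) (E : Finset (Finset α))
    (m n r : ℕ) (hVm : V.card = m) (hm : 0 < m) (hn : 0 < n) (hr : 2 ≤ r)
    (hdvd : r ∣ m) (hrn : r * n ≤ m)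
    (hE : ∀ A ∈ E, A ⊆ V ∧ A.card = n)
    (hbound : (E.card : ℝ) * (r : ℝ) ^ (1 - (n : ℤ)) *
        Real.exp (-((n : ℝ) * ((n : ℝ) - 1) * ((r : ℝ) - 1)) / (2 * m)) < 1) :
    ∃ f : α → Fin r,
      (∀ c : Fin r, (V.filter (fun v => f v = c)).card = m / r) ∧
      (∀ A ∈ E, ¬ ∃ c : Fin r, ∀ v ∈ A, f v = c) :=
  first_moment_equitable_general α V E m n r hVm hr hdvd hrn hE hbound
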